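/- Let L_k(V) be a Schurian-generated free k-category with a homogeneous action of a finite group G, trivial on objects. Then L_k(V)^G is a cleaving subcategory of L_k(V): the family X of subspaces spanned by the paths with nontrivial character is an L_k(V)^G-bimodule with {}_y[L_k(V)]_x = {}_y[L_k(V)^G]_x ⊕ {}_yX_x for all objects x, y. -/
import Mathlib


/-!
STATEMENT 18: For a Schurian-generated free `k`-category (quiver without multiple
arrows, each arrow carrying a character `χ a : G →* kˣ`) with a homogeneous action of
a finite group `G`, the invariant subcategory is cleaving: the family `X` of
subspaces spanned by the paths with nontrivial character is an
`L_k(V)^G`-bimodule with `{}_y[L_k(V)]_x = {}_y[L_k(V)^G]_x ⊕ {}_yX_x`.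
-/

open Quiver

section

variable {k G V : Type} [Field k] [Group G] [Quiver.{1} V]

/-- The character of a path: product of the characters of its arrows. -/
def pathChar (χ : ∀ x y : V, (x ⟶ y) → (G →* kˣ)) :
    ∀ {x y : V}, Path x y → G → kˣ
  | _, _, .nil => fun _ => 1
  | _, _, .cons p e => fun g => pathChar χ p g * χ _ _ e g

/-- A path is invariant if its character is trivial. -/
def IsInvPath (χ : ∀ x y : V, (x ⟶ y) → (G →* kˣ)) {x y : V} (w : Path x y) : Prop :=
  ∀ g : G, pathChar χ w g = 1

/-- The invariant subspace: the span of the invariant paths. -/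
noncomputable def InvSpace (χ : ∀ x y : V, (x ⟶ y) → (G →* kˣ)) (x y : V) :
    Submodule k (Path x y →₀ k) :=
  Submodule.span k {f | ∃ w : Path x y, IsInvPath χ w ∧ f = Finsupp.single w 1}

/-- The complement: the span of the paths with nontrivial character. -/
noncomputable def NonInvSpace (χ : ∀ x y : V, (x ⟶ y) → (G →* kˣ)) (x y : V) :
    Submodule k (Path x y →₀ k) :=
  Submodule.span k {f | ∃ w : Path x y, ¬ IsInvPath χ w ∧ f = Finsupp.single w 1}

/-- Composition in the linearized path category. -/
noncomputable def compF {x y z : V} (f : Path x y →₀ k) (g : Path y z →₀ k) :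
    Path x z →₀ k :=
  f.sum fun p cp => g.sum fun q cq => Finsupp.single (p.comp q) (cp * cq)

end

section Aux

variable {k G V : Type} [Field k] [Group G] [Quiver.{1} V]

lemma pathChar_comp (χ : ∀ x y : V, (x ⟶ y) → (G →* kˣ)) {x y z : V}
    (p : Path x y) (q : Path y z) (g : G) :
    pathChar χ (p.comp q) g = pathChar χ p g * pathChar χ q g := by
  induction q with
  | nil => simp [pathChar]
  | cons q e ih => simp [pathChar, ih, mul_assoc]

lemma invSpace_eq (χ : ∀ x y : V, (x ⟶ y) → (G →* kˣ)) (x y : V) :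
    InvSpace (k := k) χ x y
      = Finsupp.supported k k {w : Path x y | IsInvPath χ w} := by
  rw [Finsupp.supported_eq_span_single, InvSpace]
  congr 1
  ext f
  constructor
  · rintro ⟨w, hw, rfl⟩; exact ⟨w, hw, rfl⟩
  · rintro ⟨w, hw, rfl⟩; exact ⟨w, hw, rfl⟩

lemma nonInvSpace_eq (χ : ∀ x y : V, (x ⟶ y) → (G →* kˣ)) (x y : V) :
    NonInvSpace (k := k) χ x y
      = Finsupp.supported k k {w : Path x y | ¬ IsInvPath χ w} := by
  rw [Finsupp.supported_eq_span_single, NonInvSpace]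
  congr 1
  ext f
  constructor
  · rintro ⟨w, hw, rfl⟩; exact ⟨w, hw, rfl⟩
  · rintro ⟨w, hw, rfl⟩; exact ⟨w, hw, rfl⟩

end Aux

/-- The invariant subcategory of a Schurian-generated free `k`-category is a cleaving
subcategory: the noninvariant paths span a complement which is a bimodule over the
invariant subcategory. -/
theorem schurian_invariants_are_cleaving
    {k G V : Type} [Field k] [Group G] [Finite G] [Quiver.{1} V]
    [∀ x y : V, Subsingleton (x ⟶ y)]
    (χ : ∀ x y : V, (x ⟶ y) → (G →* kˣ)) :
    (∀ x y : V, IsCompl (InvSpace (k := k) χ x y) (NonInvSpace (k := k) χ x y)) ∧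
    (∀ (x y z : V) (f : Path x y →₀ k) (g : Path y z →₀ k),
        f ∈ InvSpace (k := k) χ x y → g ∈ NonInvSpace (k := k) χ y z →
          compF f g ∈ NonInvSpace (k := k) χ x z) ∧
    (∀ (x y z : V) (f : Path x y →₀ k) (g : Path y z →₀ k),
        f ∈ NonInvSpace (k := k) χ x y → g ∈ InvSpace (k := k) χ y z →
          compF f g ∈ NonInvSpace (k := k) χ x z) := by
  classical
  refine ⟨fun x y => ?_, fun x y z f g hf hg => ?_, fun x y z f g hf hg => ?_⟩
  · rw [invSpace_eq, nonInvSpace_eq]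
    constructor
    · exact Finsupp.disjoint_supported_supported (by
        rw [Set.disjoint_left]; intro w hw hw'; exact hw' hw)
    · rw [codisjoint_iff, ← Finsupp.supported_union]
      have : ({w : Path x y | IsInvPath χ w} ∪ {w : Path x y | ¬ IsInvPath χ w})
          = Set.univ := by
        ext w; simp [em]
      rw [this, Finsupp.supported_univ]
  · rw [invSpace_eq, Finsupp.mem_supported] at hf
    rw [nonInvSpace_eq, Finsupp.mem_supported] at hg ⊢
    intro w hw
    unfold compF at hw
    obtain ⟨p, hp, hw⟩ := Finset.mem_biUnion.mp (Finsupp.support_sum hw)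
    obtain ⟨q, hq, hw⟩ := Finset.mem_biUnion.mp (Finsupp.support_sum hw)
    have hw' : w = p.comp q := by
      have := Finsupp.support_single_subset hw
      simpa using this
    subst hw'
    have hpI : IsInvPath χ p := hf hp
    have hqN : ¬ IsInvPath χ q := hg hq
    intro hcomp
    apply hqN
    intro g0
    have := hcomp g0
    rw [pathChar_comp, hpI g0, one_mul] at this
    exact this
  · rw [nonInvSpace_eq, Finsupp.mem_supported] at hf ⊢
    rw [invSpace_eq, Finsupp.mem_supported] at hg
    intro w hw
    unfold compF at hw
    obtain ⟨p, hp, hw⟩ := Finset.mem_biUnion.mp (Finsupp.support_sum hw)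
    obtain ⟨q, hq, hw⟩ := Finset.mem_biUnion.mp (Finsupp.support_sum hw)
    have hw' : w = p.comp q := by
      have := Finsupp.support_single_subset hw
      simpa using this
    subst hw'
    have hpN : ¬ IsInvPath χ p := hf hp
    have hqI : IsInvPath χ q := hg hq
    intro hcomp
    apply hpN
    intro g0
    have := hcomp g0
    rw [pathChar_comp, hqI g0, mul_one] at this
    exact this
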